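/- arXiv:2106.01102 — 3 statements merged into one kernel-verified Lean document; each statement's English description precedes it below -/
import Mathlib

section
/- Let θ : [0,1] → ℝ be continuous and strictly positive, and let f ∈ C¹([0,1]) be such that g := θ f′ is C¹ and ∫₀¹ f′(x) dx = 0. Then (1/2)∫₀¹ (f′)² θ dx ≤ c₂(θ) ∫₀¹ (g′)² θ^{−1} dx, where c₂(θ) = (1/2)(∫₀¹ θ^{−1} dx)(∫₀¹ θ dx). (Weighted Poincaré inequality.) -/
open MeasureTheory Set intervalIntegral

lemma intInt01 {F : ℝ → ℝ} (h : ContinuousOn F (Set.Icc 0 1)) :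
    IntervalIntegrable F volume 0 1 :=
  ContinuousOn.intervalIntegrable (by rwa [Set.uIcc_of_le (zero_le_one (α := ℝ))])

lemma cs_aux {φ ψ : ℝ → ℝ} (hφ : ContinuousOn φ (Set.Icc 0 1))
    (hψ : ContinuousOn ψ (Set.Icc 0 1)) :
    (∫ x in (0:ℝ)..1, φ x * ψ x)^2 ≤
      (∫ x in (0:ℝ)..1, (φ x)^2) * (∫ x in (0:ℝ)..1, (ψ x)^2) := by
  have hu : Set.uIcc (0:ℝ) 1 = Set.Icc 0 1 := Set.uIcc_of_le zero_le_one
  have iφψ : IntervalIntegrable (fun x => φ x * ψ x) volume 0 1 :=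
    intInt01 (hφ.mul hψ)
  have iφ2 : IntervalIntegrable (fun x => (φ x)^2) volume 0 1 :=
    intInt01 (hφ.pow 2)
  have iψ2 : IntervalIntegrable (fun x => (ψ x)^2) volume 0 1 :=
    intInt01 (hψ.pow 2)
  set A := ∫ x in (0:ℝ)..1, (φ x)^2 with hA
  set B := ∫ x in (0:ℝ)..1, φ x * ψ x with hB
  set C := ∫ x in (0:ℝ)..1, (ψ x)^2 with hC
  have key : ∀ t : ℝ, 0 ≤ A * (t * t) + (2 * B) * t + C := by
    intro t
    have h0 : 0 ≤ ∫ x in (0:ℝ)..1, (t * φ x + ψ x)^2 :=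
      intervalIntegral.integral_nonneg zero_le_one (fun x _ => sq_nonneg _)
    have hexp : (∫ x in (0:ℝ)..1, (t * φ x + ψ x)^2)
        = A * (t * t) + (2 * B) * t + C := by
      have h1 : ∀ x, (t * φ x + ψ x)^2
          = (t * t) * (φ x)^2 + (2 * t) * (φ x * ψ x) + (ψ x)^2 := by intro x; ring
      simp_rw [h1]
      rw [intervalIntegral.integral_add ((iφ2.const_mul _).add (iφψ.const_mul _)) iψ2,
        intervalIntegral.integral_add (iφ2.const_mul _) (iφψ.const_mul _),
        intervalIntegral.integral_const_mul, intervalIntegral.integral_const_mul]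
      ring
    linarith [hexp ▸ h0]
  have hd := discrim_le_zero key
  rw [discrim] at hd
  nlinarith [hd]

theorem stmt_3 (θ : ℝ → ℝ) (hθc : ContinuousOn θ (Set.Icc 0 1))
    (hθpos : ∀ x ∈ Set.Icc (0:ℝ) 1, 0 < θ x)
    (f : ℝ → ℝ) (hf : ContDiffOn ℝ 1 f (Set.Icc 0 1))
    (g : ℝ → ℝ) (hg : ∀ x, g x = θ x * deriv f x)
    (hgC1 : ContDiffOn ℝ 1 g (Set.Icc 0 1))
    (hmean : (∫ x in (0:ℝ)..1, deriv f x) = 0) :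
    (1/2) * (∫ x in (0:ℝ)..1, (deriv f x)^2 * θ x) ≤
      ((1/2) * (∫ x in (0:ℝ)..1, (θ x)⁻¹) * (∫ x in (0:ℝ)..1, θ x)) *
        (∫ x in (0:ℝ)..1, (deriv g x)^2 * (θ x)⁻¹) := by
  have hu : Set.uIcc (0:ℝ) 1 = Set.Icc 0 1 := Set.uIcc_of_le zero_le_one
  have hUD : UniqueDiffOn ℝ (Set.Icc (0:ℝ) 1) := uniqueDiffOn_Icc one_pos
  set w := derivWithin g (Set.Icc 0 1) with hwdef
  have hθne : ∀ x ∈ Set.Icc (0:ℝ) 1, θ x ≠ 0 := fun x hx => (hθpos x hx).ne'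
  have hθinv : ContinuousOn (fun x => (θ x)⁻¹) (Set.Icc 0 1) := hθc.inv₀ hθne
  have hgc : ContinuousOn g (Set.Icc 0 1) := hgC1.continuousOn
  have hwc : ContinuousOn w (Set.Icc 0 1) :=
    hgC1.continuousOn_derivWithin hUD le_rfl
  -- deriv g = w on the interior
  have hdg_eq : ∀ x ∈ Set.Ioo (0:ℝ) 1, deriv g x = w x := by
    intro x hx
    rw [hwdef, derivWithin_of_mem_nhds (Icc_mem_nhds hx.1 hx.2)]
  -- HasDerivAt in interior
  have hgd : ∀ x ∈ Set.Ioo (0:ℝ) 1, HasDerivAt g (w x) x := by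
    intro x hx
    have hx' : x ∈ Set.Icc (0:ℝ) 1 := Set.Ioo_subset_Icc_self hx
    have := (hgC1.differentiableOn one_ne_zero x hx').hasDerivWithinAt
    exact (this.hasDerivAt (Icc_mem_nhds hx.1 hx.2)).congr_deriv rfl
  -- g has a zero in [0,1]
  have hzero : ∃ x₀ ∈ Set.Icc (0:ℝ) 1, g x₀ = 0 := by
    by_contra hcon
    push_neg at hcon
    set h : ℝ → ℝ := fun x => g x * (θ x)⁻¹ with hh
    have hhc : ContinuousOn h (Set.Icc 0 1) := hgc.mul hθinv
    have hint : (∫ x in (0:ℝ)..1, h x) = 0 := by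
      have heq : (∫ x in (0:ℝ)..1, h x) = ∫ x in (0:ℝ)..1, deriv f x := by
        apply intervalIntegral.integral_congr
        intro x hx
        rw [hu] at hx
        show g x * (θ x)⁻¹ = deriv f x
        rw [hg x]
        field_simp [hθne x hx]
      rw [heq, hmean]
    have hne : ∀ x ∈ Set.Icc (0:ℝ) 1, h x ≠ 0 := fun x hx =>
      mul_ne_zero (hcon x hx) (inv_ne_zero (hθne x hx))
    have hsign : (∀ x ∈ Set.Icc (0:ℝ) 1, 0 < h x) ∨ (∀ x ∈ Set.Icc (0:ℝ) 1, h x < 0) := by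
      rcases lt_or_gt_of_ne (hne 0 (by norm_num)) with h0 | h0
      · right
        intro x hx
        rcases lt_or_gt_of_ne (hne x hx) with h1 | h1
        · exact h1
        · exfalso
          have hmem : (0:ℝ) ∈ Set.Icc (h 0) (h x) := ⟨le_of_lt h0, le_of_lt h1⟩
          have hsub : Set.Icc (0:ℝ) x ⊆ Set.Icc 0 1 := Set.Icc_subset_Icc le_rfl hx.2
          obtain ⟨y, hy, hy0⟩ := intermediate_value_Icc hx.1 (hhc.mono hsub) hmem
          exact hne y (hsub hy) hy0
      · left
        intro x hx
        rcases lt_or_gt_of_ne (hne x hx) with h1 | h1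
        · exfalso
          have hmem : (0:ℝ) ∈ Set.Icc (h x) (h 0) := ⟨le_of_lt h1, le_of_lt h0⟩
          have hsub : Set.Icc (0:ℝ) x ⊆ Set.Icc 0 1 := Set.Icc_subset_Icc le_rfl hx.2
          obtain ⟨y, hy, hy0⟩ := intermediate_value_Icc' hx.1 (hhc.mono hsub) hmem
          exact hne y (hsub hy) hy0
        · exact h1
    rcases hsign with hpos | hneg
    · have : 0 < ∫ x in (0:ℝ)..1, h x :=
        intervalIntegral.intervalIntegral_pos_of_pos_on (intInt01 hhc)
          (fun x hx => hpos x (Set.Ioo_subset_Icc_self hx)) one_pos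
      linarith [hint ▸ this]
    · have : 0 < ∫ x in (0:ℝ)..1, -h x :=
        intervalIntegral.intervalIntegral_pos_of_pos_on (intInt01 hhc.neg)
          (fun x hx => neg_pos.mpr (hneg x (Set.Ioo_subset_Icc_self hx))) one_pos
      rw [intervalIntegral.integral_neg, hint] at this
      linarith
  obtain ⟨x₀, hx₀, hgx₀⟩ := hzero
  -- FTC for g
  have hftc : ∀ a b : ℝ, a ∈ Set.Icc (0:ℝ) 1 → b ∈ Set.Icc (0:ℝ) 1 → a ≤ b →
      (∫ t in a..b, w t) = g b - g a := by
    intro a b ha hb hab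
    apply intervalIntegral.integral_eq_sub_of_hasDeriv_right_of_le hab
      (hgc.mono (Set.Icc_subset_Icc ha.1 hb.2))
      (fun x hx => (hgd x ⟨lt_of_le_of_lt ha.1 hx.1, lt_of_lt_of_le hx.2 hb.2⟩).hasDerivWithinAt)
    apply (intInt01 hwc).mono_set
    rw [hu, Set.uIcc_of_le hab]
    exact Set.Icc_subset_Icc ha.1 hb.2
  set M := ∫ t in (0:ℝ)..1, |w t| with hM
  have habs : ∀ x ∈ Set.Icc (0:ℝ) 1, |g x| ≤ M := by
    intro x hx
    have wnn : (0:ℝ → ℝ) ≤ᵐ[(volume : Measure ℝ).restrict (Set.Ioc (0:ℝ) 1)]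
        (fun t => |w t|) := Filter.Eventually.of_forall fun t => abs_nonneg _
    rcases le_total x₀ x with hle | hle
    · have h1 := hftc x₀ x hx₀ hx hle
      have h2 : |g x| = |∫ t in x₀..x, w t| := by rw [h1, hgx₀, sub_zero]
      rw [h2]
      calc |∫ t in x₀..x, w t| ≤ ∫ t in x₀..x, |w t| :=
            intervalIntegral.abs_integral_le_integral_abs hle
        _ ≤ M := intervalIntegral.integral_mono_interval hx₀.1 hle hx.2 wnn
            (intInt01 hwc.abs)
    · have h1 := hftc x x₀ hx hx₀ hle
      have h2 : |g x| = |∫ t in x..x₀, w t| := by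
        rw [h1, hgx₀, zero_sub, abs_neg]
      rw [h2]
      calc |∫ t in x..x₀, w t| ≤ ∫ t in x..x₀, |w t| :=
            intervalIntegral.abs_integral_le_integral_abs hle
        _ ≤ M := intervalIntegral.integral_mono_interval hx.1 hle hx₀.2 wnn
            (intInt01 hwc.abs)
  -- Cauchy-Schwarz: M² ≤ A * B
  set A := ∫ x in (0:ℝ)..1, (w x)^2 * (θ x)⁻¹ with hAdef
  set B := ∫ x in (0:ℝ)..1, θ x with hBdef
  set C := ∫ x in (0:ℝ)..1, (θ x)⁻¹ with hCdef
  have hsqne : ∀ x ∈ Set.Icc (0:ℝ) 1, Real.sqrt (θ x) ≠ 0 :=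
    fun x hx => Real.sqrt_ne_zero'.mpr (hθpos x hx)
  have hsq : M^2 ≤ A * B := by
    have hφ : ContinuousOn (fun x => |w x| * (Real.sqrt (θ x))⁻¹) (Set.Icc 0 1) :=
      hwc.abs.mul ((hθc.sqrt).inv₀ hsqne)
    have hψ : ContinuousOn (fun x => Real.sqrt (θ x)) (Set.Icc 0 1) := hθc.sqrt
    have h1 := cs_aux hφ hψ
    have e1 : (∫ x in (0:ℝ)..1, (|w x| * (Real.sqrt (θ x))⁻¹) * Real.sqrt (θ x)) = M := by
      apply intervalIntegral.integral_congr
      intro x hx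
      rw [hu] at hx
      field_simp [hsqne x hx]
    have e2 : (∫ x in (0:ℝ)..1, (|w x| * (Real.sqrt (θ x))⁻¹)^2) = A := by
      apply intervalIntegral.integral_congr
      intro x hx
      rw [hu] at hx
      show (|w x| * (Real.sqrt (θ x))⁻¹)^2 = w x ^ 2 * (θ x)⁻¹
      rw [mul_pow, sq_abs, inv_pow, Real.sq_sqrt (hθpos x hx).le]
    have e3 : (∫ x in (0:ℝ)..1, (Real.sqrt (θ x))^2) = B := by
      apply intervalIntegral.integral_congr
      intro x hx
      rw [hu] at hx
      show (Real.sqrt (θ x))^2 = θ x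
      rw [Real.sq_sqrt (hθpos x hx).le]
    rw [e1, e2, e3] at h1
    exact h1
  -- rewrite LHS and RHS integrands
  have eL : (∫ x in (0:ℝ)..1, (deriv f x)^2 * θ x)
      = ∫ x in (0:ℝ)..1, (g x)^2 * (θ x)⁻¹ := by
    apply intervalIntegral.integral_congr
    intro x hx
    rw [hu] at hx
    show (deriv f x)^2 * θ x = (g x)^2 * (θ x)⁻¹
    rw [hg x]
    field_simp [hθne x hx]
  have eR : (∫ x in (0:ℝ)..1, (deriv g x)^2 * (θ x)⁻¹) = A := by
    apply intervalIntegral.integral_congr_ae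
    have h1 : ∀ᵐ (x : ℝ), x ≠ 1 := by
      rw [MeasureTheory.ae_iff]
      simp [not_not, Set.setOf_eq_eq_singleton, Real.volume_singleton]
    filter_upwards [h1] with x hx1 hx
    rw [Set.uIoc_of_le (zero_le_one (α := ℝ))] at hx
    rw [hdg_eq x ⟨hx.1, lt_of_le_of_ne hx.2 hx1⟩]
  have hA0 : 0 ≤ A := intervalIntegral.integral_nonneg zero_le_one
    (fun x hx => mul_nonneg (sq_nonneg _) (inv_nonneg.mpr (hθpos x hx).le))
  have hB0 : 0 ≤ B := intervalIntegral.integral_nonneg zero_le_one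
    (fun x hx => (hθpos x hx).le)
  have hmono : (∫ x in (0:ℝ)..1, (g x)^2 * (θ x)⁻¹) ≤ (A * B) * C := by
    have step : (∫ x in (0:ℝ)..1, (g x)^2 * (θ x)⁻¹)
        ≤ ∫ x in (0:ℝ)..1, (A * B) * (θ x)⁻¹ := by
      apply intervalIntegral.integral_mono_on zero_le_one
        (intInt01 ((hgc.pow 2).mul hθinv)) ((intInt01 hθinv).const_mul (A * B))
      intro x hx
      have h1 : (g x)^2 ≤ A * B := by
        nlinarith [sq_abs (g x), habs x hx, abs_nonneg (g x)]
      exact mul_le_mul_of_nonneg_right h1 (inv_nonneg.mpr (hθpos x hx).le)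
    rw [intervalIntegral.integral_const_mul] at step
    exact step
  rw [eL, eR]
  nlinarith [hmono]
end

section
/- Let θ : [0,1] → ℝ be continuous and strictly positive and g : [0,1] → ℝ continuously differentiable with ∫₀¹ g(x) θ(x)^{−1} dx = 0. Then ∫₀¹ g(x)² θ(x)^{−1} dx ≤ (∫₀¹ θ^{−1} dx) · (∫₀¹ (g′(z))² θ(z)^{−1} dz) · (∫₀¹ θ(z) dz). -/
open MeasureTheory Set intervalIntegral

/-- Cauchy–Schwarz for interval integrals of continuous functions. -/
lemma cs_interval {a b : ℝ} (hab : a ≤ b) {F G : ℝ → ℝ}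
    (hF : ContinuousOn F (Set.Icc a b)) (hG : ContinuousOn G (Set.Icc a b)) :
    (∫ t in a..b, F t * G t) ^ 2 ≤ (∫ t in a..b, F t ^ 2) * (∫ t in a..b, G t ^ 2) := by
  have huIcc : Set.uIcc a b ⊆ Set.Icc a b := (Set.uIcc_of_le hab).subset
  have hiF2 : IntervalIntegrable (fun t => F t ^ 2) volume a b :=
    ((hF.pow 2).mono huIcc).intervalIntegrable
  have hiG2 : IntervalIntegrable (fun t => G t ^ 2) volume a b :=
    ((hG.pow 2).mono huIcc).intervalIntegrable
  have hiFG : IntervalIntegrable (fun t => F t * G t) volume a b :=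
    ((hF.mul hG).mono huIcc).intervalIntegrable
  set A := ∫ t in a..b, G t ^ 2 with hA
  set B := ∫ t in a..b, F t * G t with hB
  set C := ∫ t in a..b, F t ^ 2 with hC
  have key : ∀ lam : ℝ, 0 ≤ A * (lam * lam) + (2 * B) * lam + C := by
    intro lam
    have h0 : 0 ≤ ∫ t in a..b, (F t + lam * G t) ^ 2 :=
      intervalIntegral.integral_nonneg hab (fun t _ => sq_nonneg _)
    have hexp : (∫ t in a..b, (F t + lam * G t) ^ 2)
        = C + (2 * lam) * B + (lam * lam) * A := by
      have h1 : ∀ t, (F t + lam * G t) ^ 2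
          = F t ^ 2 + ((2 * lam) * (F t * G t) + (lam * lam) * (G t ^ 2)) := by
        intro t; ring
      simp_rw [h1]
      rw [intervalIntegral.integral_add hiF2 ((hiFG.const_mul _).add (hiG2.const_mul _)),
        intervalIntegral.integral_add (hiFG.const_mul _) (hiG2.const_mul _),
        intervalIntegral.integral_const_mul, intervalIntegral.integral_const_mul]
      ring
    rw [hexp] at h0
    linarith
  have hd := discrim_le_zero key
  rw [discrim] at hd
  nlinarith [hd]

theorem stmt_4 (θ : ℝ → ℝ) (hθc : ContinuousOn θ (Set.Icc 0 1))
    (hθpos : ∀ x ∈ Set.Icc (0:ℝ) 1, 0 < θ x)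
    (g : ℝ → ℝ) (hg : ContDiffOn ℝ 1 g (Set.Icc 0 1))
    (hmean : (∫ x in (0:ℝ)..1, g x * (θ x)⁻¹) = 0) :
    (∫ x in (0:ℝ)..1, (g x)^2 * (θ x)⁻¹) ≤
      (∫ x in (0:ℝ)..1, (θ x)⁻¹) * ((∫ z in (0:ℝ)..1, (deriv g z)^2 * (θ z)⁻¹) *
        (∫ z in (0:ℝ)..1, θ z)) := by
  have h01 : (0:ℝ) ≤ 1 := by norm_num
  set s : Set ℝ := Set.Icc 0 1 with hs
  have hwc : ContinuousOn (fun x => (θ x)⁻¹) s :=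
    hθc.inv₀ (fun x hx => (hθpos x hx).ne')
  have hwpos : ∀ x ∈ s, 0 < (θ x)⁻¹ := fun x hx => inv_pos.2 (hθpos x hx)
  have hgc : ContinuousOn g s := hg.continuousOn
  have hu01 : Set.uIcc (0:ℝ) 1 ⊆ s := (Set.uIcc_of_le h01).subset
  have hudo : UniqueDiffOn ℝ s := uniqueDiffOn_Icc (by norm_num)
  set f' : ℝ → ℝ := derivWithin g s with hf'def
  have hf'c : ContinuousOn f' s := hg.continuousOn_derivWithin hudo le_rfl
  have hderiv : ∀ y ∈ Set.Ioo (0:ℝ) 1, HasDerivAt g (f' y) y := by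
    intro y hy
    have h1 := (hg.differentiableOn one_ne_zero y (Set.Ioo_subset_Icc_self hy)).hasDerivWithinAt
    exact h1.hasDerivAt (Icc_mem_nhds hy.1 hy.2)
  have hderiv_eq : ∀ y ∈ Set.Ioo (0:ℝ) 1, deriv g y = f' y :=
    fun y hy => (hderiv y hy).deriv
  -- Step A: g has a zero in [0,1]
  obtain ⟨c, hc, hgczero⟩ : ∃ c ∈ s, g c = 0 := by
    by_contra hno
    push_neg at hno
    have h0s : (0:ℝ) ∈ s := by simp [hs, h01]
    have hsign : (∀ x ∈ s, 0 < g x) ∨ (∀ x ∈ s, g x < 0) := by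
      rcases Ne.lt_or_gt (hno 0 h0s) with h | h
      · right
        intro x hx
        by_contra h'
        push_neg at h'
        have hx0 : Set.uIcc 0 x ⊆ s := Set.uIcc_subset_Icc h0s hx
        have hcont : ContinuousOn g (Set.uIcc 0 x) := hgc.mono hx0
        have : (0:ℝ) ∈ Set.uIcc (g 0) (g x) := Set.mem_uIcc.2 (Or.inl ⟨h.le, h'⟩)
        obtain ⟨y, hy, hy0⟩ := intermediate_value_uIcc hcont this
        exact hno y (hx0 hy) hy0
      · left
        intro x hx
        by_contra h'
        push_neg at h'
        have hx0 : Set.uIcc 0 x ⊆ s := Set.uIcc_subset_Icc h0s hx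
        have hcont : ContinuousOn g (Set.uIcc 0 x) := hgc.mono hx0
        have : (0:ℝ) ∈ Set.uIcc (g 0) (g x) := Set.mem_uIcc.2 (Or.inr ⟨h', h.le⟩)
        obtain ⟨y, hy, hy0⟩ := intermediate_value_uIcc hcont this
        exact hno y (hx0 hy) hy0
    have hgw_int : IntervalIntegrable (fun x => g x * (θ x)⁻¹) volume 0 1 :=
      ((hgc.mul hwc).mono hu01).intervalIntegrable
    rcases hsign with hpos | hneg
    · have : 0 < ∫ x in (0:ℝ)..1, g x * (θ x)⁻¹ := by
        refine intervalIntegral_pos_of_pos_on hgw_int ?_ (by norm_num)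
        intro x hx
        have hxs : x ∈ s := Set.Ioo_subset_Icc_self hx
        exact mul_pos (hpos x hxs) (hwpos x hxs)
      linarith [hmean]
    · have : 0 < ∫ x in (0:ℝ)..1, -(g x * (θ x)⁻¹) := by
        refine intervalIntegral_pos_of_pos_on hgw_int.neg ?_ (by norm_num)
        intro x hx
        have hxs : x ∈ s := Set.Ioo_subset_Icc_self hx
        have := mul_pos (neg_pos.2 (hneg x hxs)) (hwpos x hxs)
        nlinarith
      rw [intervalIntegral.integral_neg, hmean] at this
      linarith
  -- the two constants
  set K1 : ℝ := ∫ z in (0:ℝ)..1, f' z ^ 2 * (θ z)⁻¹ with hK1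
  set K2 : ℝ := ∫ z in (0:ℝ)..1, θ z with hK2
  have hintf'2w : IntervalIntegrable (fun z => f' z ^ 2 * (θ z)⁻¹) volume 0 1 :=
    (((hf'c.pow 2).mul hwc).mono hu01).intervalIntegrable
  have hintθ : IntervalIntegrable θ volume 0 1 :=
    (hθc.mono hu01).intervalIntegrable
  have hK1nonneg : 0 ≤ K1 :=
    intervalIntegral.integral_nonneg h01
      (fun u hu => mul_nonneg (sq_nonneg _) (hwpos u hu).le)
  have hK2nonneg : 0 ≤ K2 :=
    intervalIntegral.integral_nonneg h01 (fun u hu => (hθpos u hu).le)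
  -- pointwise bound via FTC + Cauchy–Schwarz, for ordered endpoints in s
  have hsub : ∀ a b : ℝ, a ∈ s → b ∈ s → a ≤ b →
      (∫ t in a..b, f' t) ^ 2 ≤ K1 * K2 := by
    intro a b ha hb hab
    have hIcc : Set.Icc a b ⊆ s := Set.Icc_subset_Icc ha.1 hb.2
    have hF : ContinuousOn (fun t => f' t * Real.sqrt ((θ t)⁻¹)) (Set.Icc a b) :=
      (hf'c.mono hIcc).mul ((hwc.mono hIcc).sqrt)
    have hG : ContinuousOn (fun t => Real.sqrt (θ t)) (Set.Icc a b) :=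
      (hθc.mono hIcc).sqrt
    have hcs := cs_interval hab hF hG
    have heq1 : (∫ t in a..b, (fun t => f' t * Real.sqrt ((θ t)⁻¹)) t * (fun t => Real.sqrt (θ t)) t)
        = ∫ t in a..b, f' t := by
      apply intervalIntegral.integral_congr
      intro t ht
      rw [Set.uIcc_of_le hab] at ht
      have hts : t ∈ s := hIcc ht
      have hθt : 0 < θ t := hθpos t hts
      simp only
      rw [mul_assoc, ← Real.sqrt_mul (inv_nonneg.2 hθt.le), inv_mul_cancel₀ hθt.ne',
        Real.sqrt_one, mul_one]
    have heq2 : (∫ t in a..b, ((fun t => f' t * Real.sqrt ((θ t)⁻¹)) t) ^ 2)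
        = ∫ t in a..b, f' t ^ 2 * (θ t)⁻¹ := by
      apply intervalIntegral.integral_congr
      intro t ht
      rw [Set.uIcc_of_le hab] at ht
      have hts : t ∈ s := hIcc ht
      simp only
      rw [mul_pow, Real.sq_sqrt (inv_nonneg.2 (hθpos t hts).le)]
    have heq3 : (∫ t in a..b, ((fun t => Real.sqrt (θ t)) t) ^ 2)
        = ∫ t in a..b, θ t := by
      apply intervalIntegral.integral_congr
      intro t ht
      rw [Set.uIcc_of_le hab] at ht
      exact Real.sq_sqrt (hθpos t (hIcc ht)).le
    rw [heq1, heq2, heq3] at hcs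
    have hm1 : (∫ t in a..b, f' t ^ 2 * (θ t)⁻¹) ≤ K1 := by
      refine intervalIntegral.integral_mono_interval ha.1 hab hb.2 ?_ hintf'2w
      filter_upwards [ae_restrict_mem measurableSet_Ioc] with u hu
      exact mul_nonneg (sq_nonneg _) (hwpos u (Set.Ioc_subset_Icc_self hu)).le
    have hm2 : (∫ t in a..b, θ t) ≤ K2 := by
      refine intervalIntegral.integral_mono_interval ha.1 hab hb.2 ?_ hintθ
      filter_upwards [ae_restrict_mem measurableSet_Ioc] with u hu
      exact (hθpos u (Set.Ioc_subset_Icc_self hu)).le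
    have hnn1 : 0 ≤ ∫ t in a..b, f' t ^ 2 * (θ t)⁻¹ :=
      intervalIntegral.integral_nonneg hab
        (fun u hu => mul_nonneg (sq_nonneg _) (hwpos u (hIcc hu)).le)
    have hnn2 : 0 ≤ ∫ t in a..b, θ t :=
      intervalIntegral.integral_nonneg hab (fun u hu => (hθpos u (hIcc hu)).le)
    calc (∫ t in a..b, f' t) ^ 2
        ≤ (∫ t in a..b, f' t ^ 2 * (θ t)⁻¹) * (∫ t in a..b, θ t) := hcs
      _ ≤ K1 * K2 := mul_le_mul hm1 hm2 hnn2 hK1nonneg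
  -- FTC: for x ∈ s, g x = ∫ t in c..x, f' t
  have hftc : ∀ x ∈ s, g x = ∫ t in c..x, f' t := by
    intro x hx
    have huIcc : Set.uIcc c x ⊆ s := Set.uIcc_subset_Icc hc hx
    have h := intervalIntegral.integral_eq_sub_of_hasDeriv_right
      (f := g) (f' := f') (a := c) (b := x)
      (hgc.mono huIcc)
      (by
        intro y hy
        have hy' : y ∈ Set.Ioo (0:ℝ) 1 := by
          constructor
          · exact lt_of_le_of_lt (le_min hc.1 hx.1) hy.1
          · exact lt_of_lt_of_le hy.2 (max_le hc.2 hx.2)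
        exact (hderiv y hy').hasDerivWithinAt)
      ((hf'c.mono huIcc).intervalIntegrable)
    rw [h, hgczero, sub_zero]
  -- pointwise bound
  have hbound : ∀ x ∈ s, g x ^ 2 ≤ K1 * K2 := by
    intro x hx
    rw [hftc x hx]
    rcases le_total c x with h | h
    · exact hsub c x hc hx h
    · rw [intervalIntegral.integral_symm]
      rw [neg_pow, show ((-1:ℝ))^2 = 1 by norm_num, one_mul]
      exact hsub x c hx hc h
  -- integrate the bound
  have hintg2w : IntervalIntegrable (fun x => g x ^ 2 * (θ x)⁻¹) volume 0 1 :=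
    (((hgc.pow 2).mul hwc).mono hu01).intervalIntegrable
  have hintw : IntervalIntegrable (fun x => (θ x)⁻¹) volume 0 1 :=
    (hwc.mono hu01).intervalIntegrable
  have hmain : (∫ x in (0:ℝ)..1, g x ^ 2 * (θ x)⁻¹)
      ≤ ∫ x in (0:ℝ)..1, (K1 * K2) * (θ x)⁻¹ := by
    refine intervalIntegral.integral_mono_on h01 hintg2w (hintw.const_mul _) ?_
    intro x hx
    exact mul_le_mul_of_nonneg_right (hbound x hx) (hwpos x hx).le
  rw [intervalIntegral.integral_const_mul] at hmain
  -- replace f' by deriv g in the statement (they agree a.e. on (0,1))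
  have hK1eq : (∫ z in (0:ℝ)..1, (deriv g z) ^ 2 * (θ z)⁻¹) = K1 := by
    apply intervalIntegral.integral_congr_ae
    have hmz : (volume : Measure ℝ) ({1} : Set ℝ) = 0 := measure_singleton 1
    filter_upwards [compl_mem_ae_iff.2 hmz] with z hz hz'
    rw [Set.uIoc_of_le h01] at hz'
    have hz1 : z ≠ 1 := by simpa using hz
    have hzIoo : z ∈ Set.Ioo (0:ℝ) 1 := ⟨hz'.1, lt_of_le_of_ne hz'.2 hz1⟩
    rw [hderiv_eq z hzIoo]
  rw [hK1eq]
  calc (∫ x in (0:ℝ)..1, g x ^ 2 * (θ x)⁻¹)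
      ≤ K1 * K2 * ∫ x in (0:ℝ)..1, (θ x)⁻¹ := hmain
    _ = (∫ x in (0:ℝ)..1, (θ x)⁻¹) * (K1 * K2) := by ring
end

section
/- Let θ ∈ C¹([0,1]) be strictly positive, f ∈ C²([0,1]) periodic with periodic derivative, and K : [0,1] → ℝ continuous with c₋ ≤ K(x) ≤ c₊, 0 < c₋ ≤ c₊. Set D(x) = −θ(x)^{−1}(θ f′)′(x). Then for any μ ∈ ℝ, −∫₀¹ K D² θ dx + μ ∫₀¹ K D f′ dx ≤ −(c₋/2)∫₀¹ D² θ dx + (μ² c₊² c(θ)/(2c₋)) ∫₀¹ (f′)² θ dx, where c(θ) = (min θ)^{−2}. -/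
open MeasureTheory Set Filter

lemma ptwise13 (Kx d t p m μ cminus cplus : ℝ) (ht : 0 < t) (hm : 0 < m) (hmt : m ≤ t)
    (hc : 0 < cminus) (hK1 : cminus ≤ Kx) (hK2 : Kx ≤ cplus) :
    -(Kx * d^2 * t) + μ * (Kx * d * p) ≤
      -(cminus/2) * (d^2*t) + (μ^2 * cplus^2 * m⁻¹^2/(2*cminus)) * (p^2*t) := by
  have h1 : μ * (Kx*d*p) - (cminus/2)*(d^2*t) ≤ μ^2*Kx^2*p^2/(2*cminus*t) := by
    rw [le_div_iff₀ (by positivity)]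
    nlinarith [sq_nonneg (cminus*t*d - μ*Kx*p)]
  have heq : (μ^2 * cplus^2 * m⁻¹^2/(2*cminus)) * (p^2*t)
      = μ^2*cplus^2*p^2*t/(2*cminus*m^2) := by
    field_simp
  have h2 : μ^2*Kx^2*p^2/(2*cminus*t) ≤ (μ^2 * cplus^2 * m⁻¹^2/(2*cminus)) * (p^2*t) := by
    rw [heq, div_le_div_iff₀ (by positivity) (by positivity)]
    have hK2' : Kx^2 ≤ cplus^2 := by nlinarith
    have hm2 : m^2 ≤ t^2 := by nlinarith
    have hkey : Kx^2 * m^2 ≤ cplus^2 * t^2 :=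
      mul_le_mul hK2' hm2 (sq_nonneg m) (by positivity)
    nlinarith [mul_nonneg (mul_nonneg (sq_nonneg μ) (sq_nonneg p)) hc.le,
      mul_le_mul_of_nonneg_left hkey
        (mul_nonneg (mul_nonneg (by positivity : (0:ℝ) ≤ 2*cminus) (sq_nonneg μ)) (sq_nonneg p))]
  have h3 : cminus*(d^2*t) ≤ Kx*(d^2*t) := by
    nlinarith [mul_nonneg (sub_nonneg.2 hK1) (mul_nonneg (sq_nonneg d) ht.le)]
  linarith

theorem stmt_13 (θ : ℝ → ℝ) (hθ : ContDiffOn ℝ 1 θ (Set.Icc 0 1))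
    (hθpos : ∀ x ∈ Set.Icc (0:ℝ) 1, 0 < θ x)
    (f : ℝ → ℝ) (hf : ContDiffOn ℝ 2 f (Set.Icc 0 1))
    (hfper : f 0 = f 1) (hf'per : deriv f 0 = deriv f 1)
    (K : ℝ → ℝ) (hK : ContinuousOn K (Set.Icc 0 1))
    (cminus cplus : ℝ) (hcminus : 0 < cminus) (hcc : cminus ≤ cplus)
    (hKb : ∀ x ∈ Set.Icc (0:ℝ) 1, cminus ≤ K x ∧ K x ≤ cplus)
    (D : ℝ → ℝ)
    (hD : ∀ x, D x = -(θ x)⁻¹ * deriv (fun y => θ y * deriv f y) x)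
    (μ : ℝ) :
    -(∫ x in (0:ℝ)..1, K x * (D x)^2 * θ x) + μ * (∫ x in (0:ℝ)..1, K x * D x * deriv f x) ≤
      -(cminus / 2) * (∫ x in (0:ℝ)..1, (D x)^2 * θ x) +
        (μ^2 * cplus^2 * (sInf (θ '' Set.Icc (0:ℝ) 1))⁻¹^2 / (2 * cminus)) *
          (∫ x in (0:ℝ)..1, (deriv f x)^2 * θ x) := by
  have hUD : UniqueDiffOn ℝ (Set.Icc (0:ℝ) 1) := uniqueDiffOn_Icc zero_lt_one
  set f' : ℝ → ℝ := derivWithin f (Set.Icc 0 1) with hf'def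
  have hf'C : ContDiffOn ℝ 1 f' (Set.Icc 0 1) := hf.derivWithin hUD (by norm_num)
  set g : ℝ → ℝ := fun y => θ y * f' y with hgdef
  have hgC : ContDiffOn ℝ 1 g (Set.Icc 0 1) := hθ.mul hf'C
  set G : ℝ → ℝ := derivWithin g (Set.Icc 0 1) with hGdef
  have hGc : ContinuousOn G (Set.Icc 0 1) :=
    (hgC.derivWithin (m := 0) hUD (by norm_num)).continuousOn
  set Dc : ℝ → ℝ := fun x => -(θ x)⁻¹ * G x with hDcdef
  have hθne : ∀ x ∈ Set.Icc (0:ℝ) 1, θ x ≠ 0 := fun x hx => (hθpos x hx).ne'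
  have hDcC : ContinuousOn Dc (Set.Icc 0 1) :=
    ((hθ.continuousOn.inv₀ hθne).neg).mul hGc
  -- pointwise equalities on the open interval
  have hdf : ∀ y ∈ Set.Ioo (0:ℝ) 1, deriv f y = f' y := fun y hy =>
    (derivWithin_of_mem_nhds (Icc_mem_nhds hy.1 hy.2)).symm
  have hDeq : ∀ x ∈ Set.Ioo (0:ℝ) 1, D x = Dc x := by
    intro x hx
    have hev : (fun y => θ y * deriv f y) =ᶠ[nhds x] g := by
      filter_upwards [Ioo_mem_nhds hx.1 hx.2] with y hy
      rw [hgdef]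
      simp only [hdf y hy]
    rw [hD x, hDcdef]
    rw [hev.deriv_eq]
    show -(θ x)⁻¹ * deriv g x = -(θ x)⁻¹ * G x
    rw [hGdef, derivWithin_of_mem_nhds (Icc_mem_nhds hx.1 hx.2)]
  -- a.e. rewriting of the integrals
  have hae : ∀ᵐ x : ℝ, x ≠ (1:ℝ) := by
    refine MeasureTheory.ae_iff.2 ?_
    simpa using measure_singleton (1:ℝ)
  have key : ∀ (F₁ F₂ : ℝ → ℝ), (∀ x ∈ Set.Ioo (0:ℝ) 1, F₁ x = F₂ x) →
      (∫ x in (0:ℝ)..1, F₁ x) = ∫ x in (0:ℝ)..1, F₂ x := by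
    intro F₁ F₂ h
    apply intervalIntegral.integral_congr_ae
    filter_upwards [hae] with x hx hmem
    rw [Set.uIoc_of_le (by norm_num : (0:ℝ) ≤ 1)] at hmem
    exact h x ⟨hmem.1, lt_of_le_of_ne hmem.2 hx⟩
  have e1 : (∫ x in (0:ℝ)..1, K x * (D x)^2 * θ x) = ∫ x in (0:ℝ)..1, K x * (Dc x)^2 * θ x :=
    key _ _ (fun x hx => by rw [hDeq x hx])
  have e2 : (∫ x in (0:ℝ)..1, K x * D x * deriv f x) = ∫ x in (0:ℝ)..1, K x * Dc x * f' x :=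
    key _ _ (fun x hx => by rw [hDeq x hx, hdf x hx])
  have e3 : (∫ x in (0:ℝ)..1, (D x)^2 * θ x) = ∫ x in (0:ℝ)..1, (Dc x)^2 * θ x :=
    key _ _ (fun x hx => by rw [hDeq x hx])
  have e4 : (∫ x in (0:ℝ)..1, (deriv f x)^2 * θ x) = ∫ x in (0:ℝ)..1, (f' x)^2 * θ x :=
    key _ _ (fun x hx => by rw [hdf x hx])
  rw [e1, e2, e3, e4]
  -- properties of m = sInf (θ '' Icc 0 1)
  set m : ℝ := sInf (θ '' Set.Icc (0:ℝ) 1) with hmdef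
  have hcpt : IsCompact (θ '' Set.Icc (0:ℝ) 1) :=
    isCompact_Icc.image_of_continuousOn hθ.continuousOn
  have hne : (θ '' Set.Icc (0:ℝ) 1).Nonempty :=
    ⟨θ 0, Set.mem_image_of_mem θ (by norm_num)⟩
  have hmpos : 0 < m := by
    obtain ⟨x₀, hx₀, hx₀e⟩ := hcpt.sInf_mem hne
    rw [hmdef, ← hx₀e]
    exact hθpos x₀ hx₀
  have hmle : ∀ x ∈ Set.Icc (0:ℝ) 1, m ≤ θ x := fun x hx =>
    csInf_le hcpt.bddBelow (Set.mem_image_of_mem θ hx)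
  -- integrability
  have hIcc : Set.uIcc (0:ℝ) 1 = Set.Icc 0 1 := Set.uIcc_of_le (by norm_num)
  have hA : IntervalIntegrable (fun x => K x * (Dc x)^2 * θ x) volume 0 1 := by
    apply ContinuousOn.intervalIntegrable; rw [hIcc]
    exact (hK.mul (hDcC.pow 2)).mul hθ.continuousOn
  have hB : IntervalIntegrable (fun x => K x * Dc x * f' x) volume 0 1 := by
    apply ContinuousOn.intervalIntegrable; rw [hIcc]
    exact (hK.mul hDcC).mul hf'C.continuousOn
  have hC : IntervalIntegrable (fun x => (Dc x)^2 * θ x) volume 0 1 := by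
    apply ContinuousOn.intervalIntegrable; rw [hIcc]
    exact (hDcC.pow 2).mul hθ.continuousOn
  have hE : IntervalIntegrable (fun x => (f' x)^2 * θ x) volume 0 1 := by
    apply ContinuousOn.intervalIntegrable; rw [hIcc]
    exact (hf'C.continuousOn.pow 2).mul hθ.continuousOn
  -- monotonicity
  have hmono : (∫ x in (0:ℝ)..1, (-(K x * (Dc x)^2 * θ x) + μ * (K x * Dc x * f' x))) ≤
      ∫ x in (0:ℝ)..1, (-(cminus/2) * ((Dc x)^2 * θ x)
        + (μ^2 * cplus^2 * m⁻¹^2/(2*cminus)) * ((f' x)^2 * θ x)) := by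
    apply intervalIntegral.integral_mono_on (by norm_num)
    · exact hA.neg.add (hB.const_mul μ)
    · exact (hC.const_mul _).add (hE.const_mul _)
    · intro x hx
      exact ptwise13 (K x) (Dc x) (θ x) (f' x) m μ cminus cplus (hθpos x hx) hmpos
        (hmle x hx) hcminus (hKb x hx).1 (hKb x hx).2
  have hA' : IntervalIntegrable (fun x => -(K x * (Dc x)^2 * θ x)) volume 0 1 := hA.neg
  have hB' : IntervalIntegrable (fun x => μ * (K x * Dc x * f' x)) volume 0 1 := hB.const_mul μ
  have hC' : IntervalIntegrable (fun x => -(cminus/2) * ((Dc x)^2 * θ x)) volume 0 1 :=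
    hC.const_mul _
  have hE' : IntervalIntegrable
      (fun x => (μ^2 * cplus^2 * m⁻¹^2/(2*cminus)) * ((f' x)^2 * θ x)) volume 0 1 :=
    hE.const_mul _
  rw [intervalIntegral.integral_add hA' hB',
    intervalIntegral.integral_add hC' hE',
    intervalIntegral.integral_neg, intervalIntegral.integral_const_mul,
    intervalIntegral.integral_const_mul, intervalIntegral.integral_const_mul] at hmono
  linarith
end
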